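/- The shadow map φ_s^(1) of Section 5 possesses three independent rational invariants: for all a, b, c, x, y, z, u, x₁ in ℂ with c·(x + y) − 1 ≠ 0, if (c·(x + y) − 1)·x₁ = −u − c·(xy − yz − uy − zu), then Σ₂(x₁, x, y, z) = Σ₂(x, y, z, u), Σ₃(x₁, x, y, z) = Σ₃(x, y, z, u), and Σ₄(x₁, x, y, z) = Σ₄(x, y, z, u). -/
import Mathlib


/-- First invariant `Σ₂` of the shadow map `φ_s^(1)` of Section 5. -/
noncomputable def Sigma₂ (c x y z u : ℂ) : ℂ :=
  c * (u*y + z*u + x*y + x*z + 2*y*z) - (x + y + z + u)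

/-- Second invariant `Σ₃` of the shadow map `φ_s^(1)`. -/
noncomputable def Sigma₃ (c x y z u : ℂ) : ℂ :=
  (x + z) * (u + y) * (c * (y + z) - 1)

/-- Third invariant `Σ₄` of the shadow map `φ_s^(1)`. -/
noncomputable def Sigma₄ (c x y z u : ℂ) : ℂ :=
  c * (u*z^2 + x*y^2 + y^2*z + y*z^2)
    + c^2 * (x*y + x*z + y*z) * (u*y + z*u + y*z) - (x + z) * (u + y)

/-- The shadow map `φ_s^(1)` of Section 5 possesses the three independent rational
invariants `Σ₂`, `Σ₃`, `Σ₄`. -/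
theorem phi1_shadow_three_invariants (a b c x y z u x₁ : ℂ)
    (h : c * (x + y) - 1 ≠ 0)
    (hrec : (c * (x + y) - 1) * x₁ = -u - c * (x*y - y*z - u*y - z*u)) :
    Sigma₂ c x₁ x y z = Sigma₂ c x y z u ∧
    Sigma₃ c x₁ x y z = Sigma₃ c x y z u ∧
    Sigma₄ c x₁ x y z = Sigma₄ c x y z u := by
  have hx : x₁ = (-u - c * (x*y - y*z - u*y - z*u)) / (c * (x + y) - 1) := by
    field_simp at hrec ⊢
    linear_combination hrec
  subst hx
  refine ⟨?_, ?_, ?_⟩ <;> simp only [Sigma₂, Sigma₃, Sigma₄] <;> field_simp <;> ring
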